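/- Let d = 3, ψ(r) = r^{1/2}, φ(r) = r², and for N > 1 let w_N = (N/2)·1_{(1−1/N, 1+1/N)}, so that α_k^{(N)}(ρ) = (Nρ/4) ∫_{1−1/N}^{1+1/N} J_{k+1/2}(rρ)² r dr for k ∈ ℕ₀. Then: (i) for all ρ > 0 and all N > 1, 2π α₀^{(N)}(ρ) = 1 − (N/(4ρ))(sin(2ρ(1+1/N)) − sin(2ρ(1−1/N))), and consequently sup_{ρ > 0} α₀^{(N)}(ρ) ≤ 1/π; (ii) there exist ρ₀ ∈ (0,π) and N₀ such that for all N ≥ N₀, α₁^{(N)}(ρ₀) > 1/π. In particular, for such N, sup_{k ∈ ℕ₀} sup_{ρ > 0} α_k^{(N)}(ρ) > sup_{ρ > 0} α₀^{(N)}(ρ). -/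

import Mathlib

noncomputable section

open MeasureTheory Real Filter

/-- The Bessel function of the first kind of order `ν`, via the Poisson integral
representation (real form; valid for `ν > -1/2` and `r > 0`). -/
def besselJ (ν : ℝ) (r : ℝ) : ℝ :=
  (r / 2) ^ ν / (Real.Gamma (1 / 2) * Real.Gamma (ν + 1 / 2)) *
    ∫ t in (-1 : ℝ)..1, Real.cos (r * t) * (1 - t ^ 2) ^ (ν - 1 / 2)

/-- In dimension `d = 3`, with `ψ(r) = r^{1/2}`, `φ(r) = r²` and weight
`w_N = (N/2)·1_{(1−1/N,1+1/N)}`, the function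
`α_k^{(N)}(ρ) = (Nρ/4) ∫_{1−1/N}^{1+1/N} J_{k+1/2}(rρ)² r dr`. -/
def alphaN (N : ℝ) (k : ℕ) (ρ : ℝ) : ℝ :=
  N * ρ / 4 * ∫ r in Set.Ioo (1 - 1 / N) (1 + 1 / N), besselJ ((k : ℝ) + 1 / 2) (r * ρ) ^ 2 * r

/-!
The half-integer Bessel functions are elementary: `J_{k+1/2}(x) = √(2/(πx)) F_k(x)` with
`F_0 = sin` and `F_1(x) = sin x / x - cos x`, so `α_k^{(N)}(ρ) = (N/(2π)) ∫ F_k(rρ)² dr`, i.e. `1/π`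
times the average of `F_k(rρ)²` over the shell `(1 - 1/N, 1 + 1/N)`. For `k = 0` the average of
`sin²` is explicit and, sine being 1-Lipschitz, at most `1`. For `k = 1`, at `ρ₀ = 5π/6` one has
`F_1(ρ₀) = 3/(5π) + √3/2 > 1`, so on a thin enough shell `F_1(rρ₀)² > 1` throughout.
-/

lemma integral_cos_mul_neg_one_one {x : ℝ} (hx : x ≠ 0) :
    ∫ t in (-1 : ℝ)..1, cos (x * t) = 2 * sin x / x := by
  rw [intervalIntegral.integral_comp_mul_left (fun t => cos t) hx, integral_cos, smul_eq_mul]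
  simp only [mul_neg, mul_one, sin_neg]
  field_simp
  ring

lemma integral_cos_mul_mul_one_sub_sq_neg_one_one {x : ℝ} (hx : x ≠ 0) :
    ∫ t in (-1 : ℝ)..1, cos (x * t) * (1 - t ^ 2) = 4 * (sin x / x ^ 3 - cos x / x ^ 2) := by
  have antideriv : ∀ t ∈ Set.uIcc (-1 : ℝ) 1, HasDerivAt
      (fun t => (1 - t ^ 2) * sin (x * t) / x - 2 * t * cos (x * t) / x ^ 2
        + 2 * sin (x * t) / x ^ 3)
      (cos (x * t) * (1 - t ^ 2)) t := by
    intro t _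
    have hxt : HasDerivAt (fun t : ℝ => x * t) x t := by
      simpa using (hasDerivAt_id t).const_mul x
    have hsin : HasDerivAt (fun t => sin (x * t)) (cos (x * t) * x) t :=
      (hasDerivAt_sin (x * t)).comp t hxt
    have hcos : HasDerivAt (fun t => cos (x * t)) (-sin (x * t) * x) t :=
      (hasDerivAt_cos (x * t)).comp t hxt
    have hpoly : HasDerivAt (fun t : ℝ => 1 - t ^ 2) (-(2 * t)) t := by
      simpa using (hasDerivAt_pow 2 t).const_sub 1
    have hlin : HasDerivAt (fun t : ℝ => 2 * t) 2 t := by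
      simpa using (hasDerivAt_id t).const_mul 2
    refine ((((hpoly.mul hsin).div_const x).sub ((hlin.mul hcos).div_const (x ^ 2))).add
      ((hsin.const_mul 2).div_const (x ^ 3))).congr_deriv ?_
    field_simp
    ring
  rw [intervalIntegral.integral_eq_sub_of_hasDerivAt antideriv
    (Continuous.intervalIntegrable (by fun_prop) _ _)]
  simp only [sin_neg, cos_neg, mul_neg, mul_one]
  field_simp
  ring

lemma sqrt_two_div_pi_mul {x : ℝ} (hx : 0 < x) : √(2 / (π * x)) = √(x / 2) * (2 / x) / √π := by
  rw [Real.sqrt_eq_iff_mul_self_eq_of_pos (by positivity), div_mul_div_comm, mul_mul_mul_comm, Real.mul_self_sqrt (by positivity),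
    Real.mul_self_sqrt pi_pos.le]
  field_simp

lemma besselJ_one_half {x : ℝ} (hx : 0 < x) : besselJ (1 / 2) x = √(2 / (π * x)) * sin x := by
  rw [besselJ, sub_self, add_halves, Gamma_one, Gamma_one_half_eq, ← sqrt_eq_rpow]
  simp only [rpow_zero, mul_one]
  rw [integral_cos_mul_neg_one_one hx.ne', sqrt_two_div_pi_mul hx]
  ring

lemma besselJ_three_halves {x : ℝ} (hx : 0 < x) :
    besselJ (3 / 2) x = √(2 / (π * x)) * (sin x / x - cos x) := by
  rw [besselJ, show (3 / 2 : ℝ) - 1 / 2 = 1 by norm_num, show (3 / 2 : ℝ) + 1 / 2 = 2 by norm_num,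
    Gamma_two, Gamma_one_half_eq, show (3 / 2 : ℝ) = 1 / 2 + 1 by norm_num, rpow_add_one (by positivity), ← sqrt_eq_rpow]
  simp only [rpow_one, mul_one]
  rw [integral_cos_mul_mul_one_sub_sq_neg_one_one hx.ne', sqrt_two_div_pi_mul hx]
  field_simp
  ring

lemma alphaN_eq_integral_sq {N ρ : ℝ} {k : ℕ} {F : ℝ → ℝ} (hN : 1 ≤ N) (hρ : 0 < ρ)
    (hF : ∀ x, 0 < x → besselJ (k + 1 / 2) x = √(2 / (π * x)) * F x) :
    alphaN N k ρ = N / (2 * π) * ∫ r in Set.Ioo (1 - 1 / N) (1 + 1 / N), F (r * ρ) ^ 2 := by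
  have hshell : ∫ r in Set.Ioo (1 - 1 / N) (1 + 1 / N), besselJ (k + 1 / 2) (r * ρ) ^ 2 * r =
      ∫ r in Set.Ioo (1 - 1 / N) (1 + 1 / N), 2 / (π * ρ) * F (r * ρ) ^ 2 := by
    refine setIntegral_congr_fun measurableSet_Ioo fun r hr => ?_
    have hr : 0 < r := lt_of_le_of_lt (by simpa using inv_le_one_of_one_le₀ hN) hr.1
    rw [hF _ (by positivity), mul_pow, sq_sqrt (by positivity)]
    field_simp
  rw [alphaN, hshell, integral_const_mul]
  field_simp
  ring

lemma integral_sin_mul_sq {ρ : ℝ} (hρ : ρ ≠ 0) (a b : ℝ) :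
    ∫ r in a..b, sin (r * ρ) ^ 2 = (b - a) / 2 - (sin (2 * ρ * b) - sin (2 * ρ * a)) / (4 * ρ) := by
  rw [intervalIntegral.integral_comp_mul_right (fun x => sin x ^ 2) hρ, integral_sin_sq,
    smul_eq_mul, show 2 * ρ * b = 2 * (b * ρ) by ring, show 2 * ρ * a = 2 * (a * ρ) by ring,
    sin_two_mul, sin_two_mul]
  field_simp
  ring

theorem two_pi_mul_alphaN_zero {N ρ : ℝ} (hN : 1 < N) (hρ : 0 < ρ) :
    2 * π * alphaN N 0 ρ =
      1 - N / (4 * ρ) * (sin (2 * ρ * (1 + 1 / N)) - sin (2 * ρ * (1 - 1 / N))) := by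
  have hshell : 1 - 1 / N ≤ 1 + 1 / N := by linarith [one_div_pos.2 (zero_lt_one.trans hN)]
  rw [alphaN_eq_integral_sq hN.le hρ (F := sin) (fun x hx => by simpa using besselJ_one_half hx),
    ← integral_Ioc_eq_integral_Ioo, ← intervalIntegral.integral_of_le hshell,
    integral_sin_mul_sq hρ.ne']
  field_simp
  ring

theorem alphaN_zero_le {N ρ : ℝ} (hN : 1 < N) (hρ : 0 < ρ) : alphaN N 0 ρ ≤ 1 / π := by
  have hN0 : 0 < N := zero_lt_one.trans hN
  have hsin : -(4 * ρ / N) ≤ sin (2 * ρ * (1 + 1 / N)) - sin (2 * ρ * (1 - 1 / N)) := by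
    have h := abs_sin_sub_sin_le (2 * ρ * (1 + 1 / N)) (2 * ρ * (1 - 1 / N))
    rw [show 2 * ρ * (1 + 1 / N) - 2 * ρ * (1 - 1 / N) = 4 * ρ / N by ring,
      abs_of_pos (by positivity : 0 < 4 * ρ / N)] at h
    exact (abs_le.1 h).1
  have h2 : 2 * π * alphaN N 0 ρ ≤ 2 := by
    calc 2 * π * alphaN N 0 ρ
        ≤ 1 - N / (4 * ρ) * (-(4 * ρ / N)) := by
          rw [two_pi_mul_alphaN_zero hN hρ]
          gcongr
      _ = 2 := by field_simp; ring
  rw [le_div_iff₀ pi_pos]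
  linarith

lemma le_sin_div_sub_cos_of_near_five_pi_div_six {u : ℝ} (hu : |u - 5 * π / 6| ≤ 1 / 50) :
    51 / 50 ≤ sin u / u - cos u := by
  have hsin₀ : sin (5 * π / 6) = 1 / 2 := by
    rw [show 5 * π / 6 = π - π / 6 by ring, sin_pi_sub, sin_pi_div_six]
  have hcos₀ : cos (5 * π / 6) = -(√3 / 2) := by
    rw [show 5 * π / 6 = π - π / 6 by ring, cos_pi_sub, cos_pi_div_six]
  have hsin : 12 / 25 ≤ sin u := by
    have h := (abs_sin_sub_sin_le u (5 * π / 6)).trans hu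
    rw [hsin₀] at h
    linarith [(abs_le.1 h).1]
  have hcos : cos u ≤ -(√3 / 2) + 1 / 50 := by
    have h := (abs_cos_sub_cos_le u (5 * π / 6)).trans hu
    rw [hcos₀] at h
    linarith [(abs_le.1 h).2]
  have hsqrt3 : 1.732 ≤ √3 := by
    rw [Real.le_sqrt (by norm_num) (by norm_num)]
    norm_num
  have hu_lo : 2.5 ≤ u := by linarith [(abs_le.1 hu).1, pi_gt_d2]
  have hu_hi : u ≤ 2.65 := by linarith [(abs_le.1 hu).2, pi_lt_d2]
  have hsinc : 12 / 25 / 2.65 ≤ sin u / u :=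
    div_le_div₀ (by linarith) hsin (by linarith) hu_hi
  norm_num at hsinc ⊢
  linarith

theorem one_div_pi_lt_alphaN_one {N : ℝ} (hN : 200 ≤ N) : 1 / π < alphaN N 1 (5 * π / 6) := by
  set ρ₀ := 5 * π / 6 with hρ₀_def
  have hρ₀ : 0 < ρ₀ := by positivity
  have hN0 : 0 < N := by linarith
  have hshell : 1 - 1 / N ≤ 1 + 1 / N := by linarith [one_div_pos.2 hN0]
  have hr_pos : ∀ r ∈ Set.Icc (1 - 1 / N) (1 + 1 / N), 0 < r := fun r hr =>
    lt_of_lt_of_le (by linarith [one_div_le_one_div_of_le (by norm_num) hN]) hr.1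
  have hnear : ∀ r ∈ Set.Ioo (1 - 1 / N) (1 + 1 / N),
      (51 / 50) ^ 2 ≤ (sin (r * ρ₀) / (r * ρ₀) - cos (r * ρ₀)) ^ 2 := by
    intro r hr
    have hr1 : |r - 1| ≤ 1 / 200 := by
      rw [abs_le]
      constructor <;> linarith [hr.1, hr.2, one_div_le_one_div_of_le (by norm_num) hN]
    refine pow_le_pow_left₀ (by norm_num) (le_sin_div_sub_cos_of_near_five_pi_div_six ?_) 2
    rw [show r * ρ₀ - 5 * π / 6 = (r - 1) * ρ₀ by ring, abs_mul, abs_of_pos hρ₀]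
    nlinarith [abs_nonneg (r - 1), pi_lt_d2]
  have hint : IntegrableOn (fun r => (sin (r * ρ₀) / (r * ρ₀) - cos (r * ρ₀)) ^ 2)
      (Set.Ioo (1 - 1 / N) (1 + 1 / N)) := by
    refine (ContinuousOn.integrableOn_Icc ?_).mono_set Set.Ioo_subset_Icc_self
    refine ((ContinuousOn.div (by fun_prop) (by fun_prop) fun r hr => ?_).sub
      (by fun_prop)).pow 2
    exact (mul_pos (hr_pos r hr) hρ₀).ne'
  have hlow := setIntegral_ge_of_const_le_real measurableSet_Ioo measure_Ioo_lt_top.ne hnear hint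
  rw [volume_real_Ioo_of_le hshell] at hlow
  rw [alphaN_eq_integral_sq (by linarith) hρ₀ (F := fun x => sin x / x - cos x) fun x hx => by
    rw [Nat.cast_one, show (1 : ℝ) + 1 / 2 = 3 / 2 by norm_num]
    exact besselJ_three_halves hx]
  calc 1 / π < (51 / 50) ^ 2 / π := by gcongr; norm_num
    _ = N / (2 * π) * ((51 / 50) ^ 2 * (1 + 1 / N - (1 - 1 / N))) := by field_simp; ring
    _ ≤ _ := by gcongr

/-- (i) for all `N > 1` and `ρ > 0`,
`2π α₀^{(N)}(ρ) = 1 − (N/(4ρ))(sin(2ρ(1+1/N)) − sin(2ρ(1−1/N)))`, so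
`α₀^{(N)}(ρ) ≤ 1/π`; (ii) there exist `ρ₀ ∈ (0,π)` and `N₀` such that for all `N ≥ N₀`
one has `α₁^{(N)}(ρ₀) > 1/π`, and in particular for such `N` the double supremum
`sup_k sup_ρ α_k^{(N)}` strictly exceeds `sup_ρ α₀^{(N)}`. -/
theorem alphaN_sup_not_attained_at_zero :
    (∀ N : ℝ, 1 < N → ∀ ρ : ℝ, 0 < ρ →
      2 * π * alphaN N 0 ρ =
        1 - N / (4 * ρ) * (Real.sin (2 * ρ * (1 + 1 / N)) - Real.sin (2 * ρ * (1 - 1 / N))) ∧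
      alphaN N 0 ρ ≤ 1 / π) ∧
    (∃ ρ₀ ∈ Set.Ioo (0 : ℝ) π, ∃ N₀ : ℝ, ∀ N : ℝ, N₀ ≤ N →
      1 / π < alphaN N 1 ρ₀ ∧
      ∃ (k : ℕ) (ρ : ℝ), 0 < ρ ∧ ∀ ρ' : ℝ, 0 < ρ' → alphaN N 0 ρ' < alphaN N k ρ) := by
  refine ⟨fun N hN ρ hρ => ⟨two_pi_mul_alphaN_zero hN hρ, alphaN_zero_le hN hρ⟩,
    5 * π / 6, ⟨by positivity, by linarith [pi_pos]⟩, 200, fun N hN => ?_⟩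
  have hα₁ := one_div_pi_lt_alphaN_one hN
  exact ⟨hα₁, 1, 5 * π / 6, by positivity,
    fun ρ hρ => (alphaN_zero_le (by linarith) hρ).trans_lt hα₁⟩
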